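/- arXiv:2207.08725 — 3 statements merged into one kernel-verified Lean document; each statement's English description precedes it below -/
import Mathlib

section
/- Let I and J be intervals of the real line and let g ∈ C¹(J; R) with inf_{x∈J} |g'(x)| > 0. Then the number of integer points x ∈ J ∩ Z with g(x) ∈ I satisfies #{x ∈ J ∩ Z : g(x) ∈ I} ≤ |I| / inf_{x∈J}|g'(x)| + 1, where |I| denotes the length of I. -/
open Set
open scoped ENNReal

-- key MVT lemma
lemma mvt_key (J : Set ℝ) (hJ : J.OrdConnected) (g g' : ℝ → ℝ)
    (hg : ∀ x ∈ J, HasDerivWithinAt g (g' x) J x)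
    (x y : ℝ) (hx : x ∈ J) (hy : y ∈ J) (hxy : x ≤ y) :
    sInf ((fun x => |g' x|) '' J) * (y - x) ≤ |g y - g x| := by
  set m := sInf ((fun x => |g' x|) '' J)
  rcases eq_or_lt_of_le hxy with rfl | hlt
  · simp
  have hsub : Icc x y ⊆ J := hJ.out hx hy
  have hcont : ContinuousOn g (Icc x y) := by
    have : ContinuousOn g J := fun z hz => (hg z hz).continuousWithinAt
    exact this.mono hsub
  have hderiv : ∀ c ∈ Ioo x y, HasDerivAt g (g' c) c := by
    intro c hc
    have hcJ : c ∈ interior J :=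
      interior_mono hsub (by rw [interior_Icc]; exact hc)
    exact (hg c (interior_subset hcJ)).hasDerivAt (mem_interior_iff_mem_nhds.mp hcJ)
  obtain ⟨c, hc, hslope⟩ := exists_hasDerivAt_eq_slope g g' hlt hcont hderiv
  have hcJ : c ∈ J := hsub ⟨hc.1.le, hc.2.le⟩
  have hm : m ≤ |g' c| := by
    apply csInf_le
    · exact ⟨0, by rintro _ ⟨z, _, rfl⟩; positivity⟩
    · exact ⟨c, hcJ, rfl⟩
  have h1 : g' c * (y - x) = g y - g x := by
    rw [hslope]
    exact div_mul_cancel₀ _ (ne_of_gt (sub_pos.mpr hlt))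
  calc m * (y - x) ≤ |g' c| * (y - x) := by
        apply mul_le_mul_of_nonneg_right hm (by linarith)
    _ = |g' c * (y - x)| := by rw [abs_mul, abs_of_nonneg (by linarith : (0:ℝ) ≤ y - x)]
    _ = |g y - g x| := by rw [h1]

/-- counting lemma: if `I` and `J` are intervals of `ℝ` and
`g ∈ C¹(J;ℝ)` (with derivative `g'` on `J`) satisfies `inf_{x ∈ J} |g'(x)| > 0`,
then the number of integers `x ∈ J` with `g x ∈ I` is at most
`|I| / inf_{x ∈ J} |g'(x)| + 1`.  Here the cardinality is taken in `ℕ∞ ⊆ ℝ≥0∞`,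
and the length `|I|` is the (extended) diameter of `I`. -/
theorem counting_lemma
    (I J : Set ℝ) (hI : I.OrdConnected) (hJ : J.OrdConnected)
    (g g' : ℝ → ℝ)
    (hg : ∀ x ∈ J, HasDerivWithinAt g (g' x) J x)
    (hg' : ContinuousOn g' J)
    (hinf : 0 < sInf ((fun x => |g' x|) '' J)) :
    (Set.encard {x : ℤ | (x : ℝ) ∈ J ∧ g x ∈ I} : ℝ≥0∞) ≤
      EMetric.diam I / ENNReal.ofReal (sInf ((fun x => |g' x|) '' J)) + 1 := by
  set m := sInf ((fun x => |g' x|) '' J) with hm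
  set S := {x : ℤ | (x : ℝ) ∈ J ∧ g x ∈ I} with hS
  rcases S.eq_empty_or_nonempty with hE | ⟨x0, hx0⟩
  · rw [hE]; simp
  rcases eq_or_ne (EMetric.diam I) ⊤ with hD | hD
  · rw [hD, ENNReal.top_div_of_ne_top (by simp)]
    simp
  -- finite diameter case
  set D := (EMetric.diam I).toReal with hDdef
  have hD0 : 0 ≤ D := ENNReal.toReal_nonneg
  -- key bound: for x ≤ y in S, m * (y - x) ≤ D
  have key : ∀ x ∈ S, ∀ y ∈ S, (x : ℤ) ≤ y → m * ((y : ℝ) - (x : ℝ)) ≤ D := by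
    intro x hx y hy hxy
    have h1 := mvt_key J hJ g g' hg x y hx.1 hy.1 (by exact_mod_cast hxy)
    have h2 : dist (g y) (g x) ≤ D := by
      rw [hDdef, dist_edist]
      exact ENNReal.toReal_mono hD (EMetric.edist_le_diam_of_mem hy.2 hx.2)
    rw [Real.dist_eq] at h2
    linarith
  -- S is bounded below
  have hbdd : ∃ b : ℤ, ∀ z : ℤ, z ∈ S → b ≤ z := by
    refine ⟨x0 - ⌈D / m⌉, fun z hz => ?_⟩
    have h2 : ((x0 : ℝ) - z) ≤ D / m := by
      rcases le_total z x0 with h | h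
      · exact (le_div_iff₀' hinf).mpr (key z hz x0 hx0 h)
      · have hz' : ((x0 : ℝ) - z) ≤ 0 := by
          have : (z : ℝ) ≥ x0 := by exact_mod_cast h
          linarith
        exact hz'.trans (div_nonneg hD0 hinf.le)
    have h3 : (x0 : ℤ) - z ≤ ⌈D / m⌉ := by
      have h4 : ((x0 - z : ℤ) : ℝ) ≤ D / m := by push_cast; linarith
      exact_mod_cast h4.trans (Int.le_ceil _)
    omega
  obtain ⟨a, haS, hamin⟩ := Int.exists_least_of_bdd (P := fun z => z ∈ S)
    (by obtain ⟨b, hb⟩ := hbdd; exact ⟨b, hb⟩) ⟨x0, hx0⟩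
  -- S ⊆ Icc a (a + ⌊D/m⌋)
  set f : ℤ := ⌊D / m⌋ with hf
  have hf0 : 0 ≤ f := Int.floor_nonneg.mpr (div_nonneg hD0 hinf.le)
  have hsub : S ⊆ Set.Icc a (a + f) := by
    intro z hz
    refine ⟨hamin z hz, ?_⟩
    have h1 : m * ((z : ℝ) - a) ≤ D := key a haS z hz (hamin z hz)
    have h2 : ((z : ℝ) - a) ≤ D / m := (le_div_iff₀' hinf).mpr h1
    have h3 : (z : ℤ) - a ≤ f := by
      rw [hf, Int.le_floor]; push_cast; linarith
    omega
  have hcard : S.encard ≤ (f.toNat + 1 : ℕ) := by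
    calc S.encard ≤ (Set.Icc a (a + f)).encard := Set.encard_mono hsub
      _ = ((Finset.Icc a (a + f)).card : ℕ∞) := by
          rw [← Finset.coe_Icc, Set.encard_coe_eq_coe_finsetCard]
      _ = ((f.toNat + 1 : ℕ) : ℕ∞) := by
          rw [Int.card_Icc]
          congr 1
          omega
  have hcast : (S.encard : ℝ≥0∞) ≤ ((f.toNat : ℝ≥0∞) + 1) := by
    have := hcard
    rw [← ENat.toENNReal_le] at this
    refine this.trans ?_
    push_cast
    rfl
  refine hcast.trans ?_
  have hdiam : EMetric.diam I = ENNReal.ofReal D := (ENNReal.ofReal_toReal hD).symm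
  rw [hdiam, ← ENNReal.ofReal_div_of_pos hinf]
  gcongr
  have : f.toNat = ⌊D / m⌋₊ := by rw [hf, Int.floor_toNat]
  rw [this, ← ENNReal.ofReal_natCast]
  exact ENNReal.ofReal_le_ofReal (Nat.floor_le (div_nonneg hD0 hinf.le))
end

section
/- There exists an absolute constant C > 0 with the following property: for all intervals I, J of the real line, every θ > 0, and every g ∈ C²(R) such that g''(x) ≥ θ for all x ∈ J, one has #{x ∈ J ∩ Z : g(x) ∈ I} ≤ C ( |I|^{1/2} / θ^{1/2} + 1 ), where |I| denotes the length of I. -/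
/-!
Since `g'' ≥ θ` on `J`, the function `g` is `θ`-strongly convex there, so for integers
`a < b < c` of `J` the slopes of `g` over `[a, b]` and `[b, c]` differ by at least
`θ (c - a) / 2`. If moreover `g a, g b, g c ∈ I`, both slopes are controlled by `|I|`, which
forces `(b - a) (c - b) ≤ 2 |I| / θ`. Hence every such integer lies within `√(2 |I| / θ)` of the
smallest or of the largest one, and there are at most `2 √(2 |I| / θ) + 2` of them.
-/

open Set Finset
open scoped ENNReal

lemma strongConvexOn_of_hasDerivAt2_ge {s : Set ℝ} (hs : Convex ℝ s) {m : ℝ} {f f' f'' : ℝ → ℝ}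
    (hf : ∀ x, HasDerivAt f (f' x) x) (hf' : ∀ x, HasDerivAt f' (f'' x) x)
    (hm : ∀ x ∈ s, m ≤ f'' x) : StrongConvexOn s m f := by
  have hsq (x : ℝ) : HasDerivAt (fun y : ℝ ↦ m / 2 * ‖y‖ ^ 2) (m * x) x := by
    simp_rw [Real.norm_eq_abs, sq_abs]
    exact ((hasDerivAt_pow 2 x).const_mul (m / 2)).congr_deriv (by norm_num; ring)
  rw [strongConvexOn_iff_convex]
  refine convexOn_of_hasDerivWithinAt2_nonneg hs (f' := fun x ↦ f' x - m * x)
    (f'' := fun x ↦ f'' x - m) ?_ (fun x _ ↦ ((hf x).sub (hsq x)).hasDerivWithinAt)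
    (fun x _ ↦ ((hf' x).sub ((hasDerivAt_id x).const_mul m) |>.congr_deriv (by ring))
      |>.hasDerivWithinAt) ?_
  · exact fun x _ ↦ ((hf x).sub (hsq x)).continuousAt.continuousWithinAt
  · exact fun x hx ↦ sub_nonneg.2 (hm x (interior_subset hx))

lemma StrongConvexOn.mul_sub_mul_sub_le {s : Set ℝ} {m D : ℝ} {f : ℝ → ℝ}
    (hf : StrongConvexOn s m f) {a b c : ℝ} (ha : a ∈ s) (hc : c ∈ s) (hab : a < b) (hbc : b < c)
    (hfa : f a - f b ≤ D) (hfc : f c - f b ≤ D) : m * ((b - a) * (c - b)) ≤ 2 * D := by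
  have hslope := (strongConvexOn_iff_convex.1 hf).slope_mono_adjacent ha hc hab hbc
  simp only [Real.norm_eq_abs, sq_abs] at hslope
  rw [div_le_div_iff₀ (sub_pos.2 hab) (sub_pos.2 hbc)] at hslope
  have hca : 0 < c - a := by linarith
  refine le_of_mul_le_mul_right ?_ hca
  nlinarith [mul_le_mul_of_nonneg_left hfa (sub_pos.2 hbc).le,
    mul_le_mul_of_nonneg_left hfc (sub_pos.2 hab).le]

lemma Finset.card_le_of_gap_le {F : Finset ℤ} {t : ℕ}
    (h : ∀ a ∈ F, ∀ b ∈ F, ∀ c ∈ F, a < b → b < c → b - a ≤ t ∨ c - b ≤ t) :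
    #F ≤ 2 * (t + 1) := by
  rcases F.eq_empty_or_nonempty with rfl | hF
  · simp
  set a := F.min' hF
  set c := F.max' hF
  have hsub : F ⊆ Icc a (a + t) ∪ Icc (c - t) c := by
    intro b hb
    have hab := F.min'_le b hb
    have hbc := F.le_max' b hb
    rcases hab.eq_or_lt with hab' | hab
    · exact mem_union_left _ (mem_Icc.2 ⟨hab, by omega⟩)
    rcases hbc.eq_or_lt with hbc' | hbc
    · exact mem_union_right _ (mem_Icc.2 ⟨by omega, hbc⟩)
    rcases h a (F.min'_mem hF) b hb c (F.max'_mem hF) hab hbc with hgap | hgap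
    · exact mem_union_left _ (mem_Icc.2 ⟨hab.le, by omega⟩)
    · exact mem_union_right _ (mem_Icc.2 ⟨by omega, hbc.le⟩)
  calc #F ≤ #(Icc a (a + t) ∪ Icc (c - t) c) := card_le_card hsub
    _ ≤ #(Icc a (a + t)) + #(Icc (c - t) c) := card_union_le _ _
    _ = 2 * (t + 1) := by simp only [Int.card_Icc]; omega

lemma Set.encard_le_of_gap_le {T : Set ℤ} {t : ℕ}
    (h : ∀ a ∈ T, ∀ b ∈ T, ∀ c ∈ T, a < b → b < c → b - a ≤ t ∨ c - b ≤ t) :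
    T.encard ≤ 2 * (t + 1) := by
  have hcard (F : Finset ℤ) (hF : ↑F ⊆ T) : #F ≤ 2 * (t + 1) :=
    Finset.card_le_of_gap_le fun a ha b hb c hc ↦ h a (hF ha) b (hF hb) c (hF hc)
  have hT : T.Finite := by
    by_contra hT
    obtain ⟨F, hF, hFcard⟩ := Set.Infinite.exists_subset_card_eq hT (2 * (t + 1) + 1)
    have := hcard F hF
    omega
  rw [← hT.coe_toFinset, encard_coe_eq_coe_finsetCard]
  exact_mod_cast hcard _ hT.coe_toFinset.subset

lemma Int.le_floor_sqrt_or_le_floor_sqrt {x y : ℤ} {K : ℝ} (h : (x * y : ℝ) ≤ K) :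
    x ≤ ⌊√K⌋₊ ∨ y ≤ ⌊√K⌋₊ := by
  by_contra! hxy
  have hx : √K < x := by
    have : ((⌊√K⌋₊ + 1 : ℕ) : ℤ) ≤ x := by omega
    exact (Nat.lt_floor_add_one _).trans_le (by exact_mod_cast this)
  have hy : √K < y := by
    have : ((⌊√K⌋₊ + 1 : ℕ) : ℤ) ≤ y := by omega
    exact (Nat.lt_floor_add_one _).trans_le (by exact_mod_cast this)
  have hxy := mul_lt_mul'' hx hy (Real.sqrt_nonneg K) (Real.sqrt_nonneg K)
  rw [← sq, Real.sq_sqrt'] at hxy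
  linarith [le_max_left K 0]

lemma ENNReal.rpow_half_div_ofReal_rpow_half {D : ℝ≥0∞} (hD : D ≠ ⊤) {θ : ℝ} (hθ : 0 < θ) :
    D ^ (1 / 2 : ℝ) / ENNReal.ofReal (θ ^ (1 / 2 : ℝ)) = ENNReal.ofReal √(D.toReal / θ) := by
  rw [← ENNReal.ofReal_toReal hD, ENNReal.ofReal_rpow_of_nonneg ENNReal.toReal_nonneg (by norm_num),
    ← ENNReal.ofReal_div_of_pos (by positivity), ← Real.sqrt_eq_rpow, ← Real.sqrt_eq_rpow,
    ENNReal.toReal_ofReal ENNReal.toReal_nonneg, Real.sqrt_div' _ hθ.le]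

lemma two_mul_floor_sqrt_two_mul_add_one_le (x : ℝ) :
    2 * (⌊√(2 * x)⌋₊ + 1 : ℝ) ≤ 3 * (√x + 1) := by
  have hfloor : (⌊√(2 * x)⌋₊ : ℝ) ≤ √2 * √x := by
    rw [← Real.sqrt_mul zero_le_two]
    exact Nat.floor_le (Real.sqrt_nonneg _)
  have hsqrt2 : √2 ≤ 3 / 2 := Real.sqrt_le_iff.2 (by norm_num)
  nlinarith [Real.sqrt_nonneg x]

/-- second-order counting lemma: there is an absolute constant
`C > 0` such that for all intervals `I, J ⊆ ℝ`, every `θ > 0` and every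
`g ∈ C²(ℝ)` with `g'' ≥ θ` on `J`, the number of integers `x ∈ J` with `g x ∈ I`
is at most `C (|I|^{1/2} / θ^{1/2} + 1)`.  The cardinality is taken in
`ℕ∞ ⊆ ℝ≥0∞` and `|I|` is the (extended) diameter of `I`. -/
theorem counting_lemma_second_order :
    ∃ C : ℝ, 0 < C ∧
      ∀ (I J : Set ℝ), I.OrdConnected → J.OrdConnected →
      ∀ θ : ℝ, 0 < θ →
      ∀ g : ℝ → ℝ, ContDiff ℝ 2 g →
        (∀ x ∈ J, θ ≤ deriv (deriv g) x) →
        (Set.encard {x : ℤ | (x : ℝ) ∈ J ∧ g x ∈ I} : ℝ≥0∞) ≤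
          ENNReal.ofReal C *
            ((EMetric.diam I) ^ ((1:ℝ)/2) / ENNReal.ofReal (θ ^ ((1:ℝ)/2)) + 1) := by
  refine ⟨3, by norm_num, fun I J _ hJ θ hθ g hg hg'' ↦ ?_⟩
  rcases eq_or_ne (EMetric.diam I) ⊤ with hI | hI
  · simp [hI, ENNReal.top_div_of_ne_top, ENNReal.mul_top]
  set D := Metric.diam I
  set N := ⌊√(2 * (D / θ))⌋₊
  have hconv : StrongConvexOn J θ g := strongConvexOn_of_hasDerivAt2_ge hJ.convex
    (fun x ↦ (hg.differentiable two_ne_zero x).hasDerivAt)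
    (fun x ↦ (hg.differentiable_deriv_two x).hasDerivAt) hg''
  have hosc : ∀ y ∈ I, ∀ z ∈ I, y - z ≤ D := fun y hy z hz ↦
    (le_abs_self _).trans (Metric.dist_le_diam_of_mem' hI hy hz)
  set T := {x : ℤ | (x : ℝ) ∈ J ∧ g x ∈ I}
  have hgap : ∀ a ∈ T, ∀ b ∈ T, ∀ c ∈ T, a < b → b < c → b - a ≤ N ∨ c - b ≤ N := by
    intro a ha b hb c hc hab hbc
    refine Int.le_floor_sqrt_or_le_floor_sqrt ?_
    rw [mul_div_assoc', le_div_iff₀' hθ]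
    push_cast
    exact hconv.mul_sub_mul_sub_le ha.1 hc.1 (by exact_mod_cast hab) (by exact_mod_cast hbc)
      (hosc _ ha.2 _ hb.2) (hosc _ hc.2 _ hb.2)
  calc _ ≤ (((2 * (N + 1) : ℕ) : ℕ∞) : ℝ≥0∞) := by exact_mod_cast Set.encard_le_of_gap_le hgap
    _ = ENNReal.ofReal (2 * (N + 1)) := by norm_cast
    _ ≤ ENNReal.ofReal (3 * (√(D / θ) + 1)) :=
      ENNReal.ofReal_le_ofReal (two_mul_floor_sqrt_two_mul_add_one_le _)
    _ = _ := by
      rw [ENNReal.rpow_half_div_ofReal_rpow_half hI hθ, ENNReal.ofReal_mul zero_le_three,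
        ENNReal.ofReal_add (Real.sqrt_nonneg _) zero_le_one, ENNReal.ofReal_one]
      rfl
end

section
/- (Resonance lower bound.) Let p_{α+1} satisfy Hypothesis 1 with 1 ≤ α ≤ 2 and set Ω_{k+1}(ξ₁,…,ξ_{k+2}) := Σ_{n=1}^{k+2} p_{α+1}(ξ_n). For every C₁ ≥ 1 there exist constants c > 0 and K ≥ 1 (depending only on C₁, α and p_{α+1}) such that for every integer k ≥ 1 and every (ξ₁,…,ξ_{k+2}) ∈ Z^{k+2} with Σ_{j=1}^{k+2} ξ_j = 0, |ξ₁| ≤ C₁|ξ₂|, |ξ₂| ≤ C₁|ξ₁|, |ξ₃| ≤ C₁|ξ₂|, and — in case k ≥ 2 — |ξ₃| ≥ K·k·max_{4≤j≤k+2}|ξ_j|, one has |Ω_{k+1}(ξ₁,…,ξ_{k+2})| ≥ c |ξ₃| |ξ₁|^α, provided |ξ₁| ≥ K (1 + max_{ξ∈[0,ξ₀]}|p'_{α+1}(ξ)|)^{1/α}. -/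
/-!
By oddness of `p` we may take `ξ₁ = a > 0`. With `d = ξ₃` and `s` the sum of the remaining
frequencies, `ξ₂ = -(a + d) - s`, so `Ω` is the three-wave resonance `-(p (a + d) - p a - p d)`
up to `p ξ₂ - p (-(a + d))` and the tail terms `p ξ_j`, `j ≥ 4`. Since `|p'| ≲ a ^ α` on
`[-R, R]`, `R ≈ a`, these are `≲ (|s| + ∑ |ξ_j|) a ^ α ≲ |d| a ^ α / K`. The three-wave term is
bounded below by the mean value theorem: for `x ≥ ξ₀` and `y ≥ 0`,
`p (x + y) - p x - p y = y (p' (θ + x) - p' θ)`, and the lower bound on `p''` gives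
`p' (θ + x) - p' θ ≳ x ^ α - sup_{[0, ξ₀]} |p'|`. Applied to the two of `a`, `d`, `-(a + d)`
that share a sign, this yields `|p (a + d) - p a - p d| ≳ |d| a ^ α`.
-/

open Set

noncomputable section

/-- **Hypothesis 1**: `p` is the symbol of the dispersive operator `L_{α+1}`;
it is an odd real-valued function of class `C¹` on `ℝ` and `C²` away from the
origin, and for `ξ ≥ ξ₀` the first and second derivatives of `p` are comparable
to `ξ^α` and `ξ^(α-1)` respectively. -/
structure Hyp1 (α ξ₀ c C : ℝ) (p : ℝ → ℝ) : Prop where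
  xi0_pos : 0 < ξ₀
  c_pos : 0 < c
  c_le_C : c ≤ C
  smooth1 : ContDiff ℝ 1 p
  smooth2 : ∀ x : ℝ, x ≠ 0 → ContDiffAt ℝ 2 p x
  odd : ∀ x : ℝ, p (-x) = -p x
  deriv_lb : ∀ ξ : ℝ, ξ₀ ≤ ξ → c * ξ ^ α ≤ deriv p ξ
  deriv_ub : ∀ ξ : ℝ, ξ₀ ≤ ξ → deriv p ξ ≤ C * ξ ^ α
  deriv2_lb : ∀ ξ : ℝ, ξ₀ ≤ ξ → c * ξ ^ (α - 1) ≤ deriv (deriv p) ξ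
  deriv2_ub : ∀ ξ : ℝ, ξ₀ ≤ ξ → deriv (deriv p) ξ ≤ C * ξ ^ (α - 1)

theorem Fin.sum_univ_three_add {β : Type*} [AddCommMonoid β] {m : ℕ} (f : Fin (m + 3) → β) :
    ∑ j, f j = f 0 + f 1 + f 2 + ∑ j : Fin m, f j.succ.succ.succ := by
  simp only [Fin.sum_univ_succ, Fin.succ_zero_eq_one, Fin.succ_one_eq_two, add_assoc]

theorem sum_abs_le_div_of_mul_le {m : ℕ} (f : Fin m → ℝ) {K B : ℝ} (hK : 0 < K) (hB : 0 ≤ B)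
    (h : ∀ j, K * ↑(m + 1) * |f j| ≤ B) : ∑ j, |f j| ≤ B / K := by
  have hm : (0 : ℝ) < ↑(m + 1) := by positivity
  calc ∑ j, |f j| ≤ ∑ _j : Fin m, B / (K * ↑(m + 1)) :=
        Finset.sum_le_sum fun j _ => by rw [le_div_iff₀ (by positivity), mul_comm]; exact h j
    _ = m / ↑(m + 1) * (B / K) := by
        simp only [Finset.sum_const, Finset.card_univ, Fintype.card_fin, nsmul_eq_mul]
        field_simp
    _ ≤ B / K := mul_le_of_le_one_left (by positivity) ((div_le_one hm).2 (by simp))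

theorem le_and_mul_le_rpow_of_mul_rpow_le {α K M x : ℝ} (hα : 1 ≤ α) (hK : 1 ≤ K) (hM : 0 ≤ M)
    (h : K * (1 + M) ^ (1 / α) ≤ x) : K ≤ x ∧ K * M ≤ x ^ α := by
  have h1M : 1 ≤ (1 + M) ^ (1 / α) := Real.one_le_rpow (by linarith) (by positivity)
  refine ⟨(le_mul_of_one_le_right (by linarith) h1M).trans h, ?_⟩
  have hpow : (K * (1 + M) ^ (1 / α)) ^ α = K ^ α * (1 + M) := by
    rw [Real.mul_rpow (by linarith) (by positivity), ← Real.rpow_mul (by linarith),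
      one_div_mul_cancel (by linarith), Real.rpow_one]
  have hKα : K ≤ K ^ α := by simpa using Real.rpow_le_rpow_of_exponent_le hK hα
  calc K * M ≤ K ^ α * (1 + M) := by nlinarith
    _ = (K * (1 + M) ^ (1 / α)) ^ α := hpow.symm
    _ ≤ x ^ α := Real.rpow_le_rpow (by positivity) h (by linarith)

namespace Hyp1

variable {α ξ₀ c₀ C₀ M : ℝ} {p : ℝ → ℝ}

theorem map_zero (hp : Hyp1 α ξ₀ c₀ C₀ p) : p 0 = 0 := by
  linarith [neg_zero (G := ℝ) ▸ hp.odd 0]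

theorem deriv_neg (hp : Hyp1 α ξ₀ c₀ C₀ p) (x : ℝ) : deriv p (-x) = deriv p x := by
  have h := deriv_comp_neg p x
  rw [funext hp.odd, deriv.fun_neg] at h
  linarith

theorem differentiable (hp : Hyp1 α ξ₀ c₀ C₀ p) : Differentiable ℝ p :=
  hp.smooth1.differentiable one_ne_zero

theorem continuous_deriv (hp : Hyp1 α ξ₀ c₀ C₀ p) : Continuous (deriv p) :=
  hp.smooth1.continuous_deriv le_rfl

theorem abs_deriv_le_sSup (hp : Hyp1 α ξ₀ c₀ C₀ p) :
    ∀ x ∈ Icc 0 ξ₀, |deriv p x| ≤ sSup ((fun x => |deriv p x|) '' Icc 0 ξ₀) := fun x hx =>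
  le_csSup (isCompact_Icc.image hp.continuous_deriv.abs).bddAbove ⟨x, hx, rfl⟩

theorem differentiableAt_deriv (hp : Hyp1 α ξ₀ c₀ C₀ p) {x : ℝ} (hx : x ≠ 0) :
    DifferentiableAt ℝ (deriv p) x := by
  obtain ⟨u, hu, hcd⟩ := (hp.smooth2 x hx).contDiffOn le_rfl (by simp)
  obtain ⟨v, hvu, hv, hxv⟩ := mem_nhds_iff.mp hu
  have h1 : ContDiffOn ℝ 1 (deriv p) v := (hcd.mono hvu).deriv_of_isOpen hv (by norm_num)
  exact (h1.differentiableOn one_ne_zero).differentiableAt (hv.mem_nhds hxv)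

theorem mul_rpow_mul_le_deriv_sub (hp : Hyp1 α ξ₀ c₀ C₀ p) (hα : 1 ≤ α) {u v : ℝ}
    (hu : ξ₀ ≤ u) (huv : u ≤ v) :
    c₀ * u ^ (α - 1) * (v - u) ≤ deriv p v - deriv p u := by
  have hu0 : 0 < u := hp.xi0_pos.trans_le hu
  refine (convex_Ici u).mul_sub_le_image_sub_of_le_deriv hp.continuous_deriv.continuousOn
    (fun x hx => (hp.differentiableAt_deriv ?_).differentiableWithinAt) (fun x hx => ?_)
    u self_mem_Ici v huv huv
  · rw [interior_Ici] at hx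
    exact (hu0.trans hx).ne'
  · rw [interior_Ici, mem_Ioi] at hx
    calc c₀ * u ^ (α - 1) ≤ c₀ * x ^ (α - 1) :=
          mul_le_mul_of_nonneg_left (Real.rpow_le_rpow hu0.le hx.le (by linarith)) hp.c_pos.le
      _ ≤ deriv (deriv p) x := hp.deriv2_lb x (hu.trans hx.le)

theorem mul_rpow_sub_le_deriv_add_sub (hp : Hyp1 α ξ₀ c₀ C₀ p) (hα : 1 ≤ α)
    (hM : ∀ x ∈ Icc 0 ξ₀, |deriv p x| ≤ M) {t b : ℝ} (ht : 0 ≤ t) (hb : ξ₀ ≤ b) :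
    c₀ * (b / 2) ^ α - M ≤ deriv p (t + b) - deriv p t := by
  have hb0 : 0 < b := hp.xi0_pos.trans_le hb
  rcases le_or_gt t ξ₀ with htξ | htξ
  · have hpt : deriv p t ≤ M := (le_abs_self _).trans (hM t ⟨ht, htξ⟩)
    have hpow : c₀ * (b / 2) ^ α ≤ c₀ * (t + b) ^ α := by
      gcongr
      · exact hp.c_pos.le
      · linarith
    linarith [hp.deriv_lb (t + b) (by linarith)]
  · -- halve the step so that the second-derivative bound is applied at a point `≥ b / 2`
    have hM0 : 0 ≤ M := (abs_nonneg _).trans (hM 0 ⟨le_rfl, hp.xi0_pos.le⟩)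
    have hmono : 0 ≤ deriv p (t + b / 2) - deriv p t :=
      (mul_nonneg (mul_nonneg hp.c_pos.le (Real.rpow_nonneg ht _)) (by linarith)).trans
        (hp.mul_rpow_mul_le_deriv_sub hα htξ.le (by linarith : t ≤ t + b / 2))
    have hgrow := hp.mul_rpow_mul_le_deriv_sub hα (by linarith : ξ₀ ≤ t + b / 2)
      (by linarith : t + b / 2 ≤ t + b)
    have hpow : (b / 2) ^ α = (b / 2) ^ (α - 1) * (b / 2) := by
      rw [← Real.rpow_add_one (by positivity), sub_add_cancel]
    have hhalf : c₀ * (b / 2) ^ α ≤ c₀ * (t + b / 2) ^ (α - 1) * (t + b - (t + b / 2)) := by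
      rw [hpow, ← mul_assoc, show t + b - (t + b / 2) = b / 2 by ring]
      gcongr
      · exact hp.c_pos.le
      · linarith
    linarith

theorem mul_le_map_add_sub_sub (hp : Hyp1 α ξ₀ c₀ C₀ p) (hα : 1 ≤ α)
    (hM : ∀ x ∈ Icc 0 ξ₀, |deriv p x| ≤ M) {x y : ℝ} (hx : ξ₀ ≤ x) (hy : 0 ≤ y) :
    y * (c₀ * (x / 2) ^ α - M) ≤ p (x + y) - p x - p y := by
  have hF : ∀ t, HasDerivAt (fun t => p (t + x) - p t) (deriv p (t + x) - deriv p t) t :=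
    fun t => ((hp.differentiable (t + x)).hasDerivAt.comp_add_const t x).sub
      (hp.differentiable t).hasDerivAt
  have key := (convex_Ici (0 : ℝ)).mul_sub_le_image_sub_of_le_deriv
    (C := c₀ * (x / 2) ^ α - M) (fun t _ => (hF t).continuousAt.continuousWithinAt)
    (fun t _ => (hF t).differentiableAt.differentiableWithinAt)
    (fun t ht => ?_) 0 self_mem_Ici y hy hy
  · simp only [zero_add, hp.map_zero, sub_zero] at key
    rw [add_comm y x] at key
    linarith
  · rw [interior_Ici, mem_Ioi] at ht
    rw [(hF t).deriv]
    exact hp.mul_rpow_sub_le_deriv_add_sub hα hM ht.le hx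

theorem min_mul_le_abs_map_add_sub_sub (hp : Hyp1 α ξ₀ c₀ C₀ p) (hα : 1 ≤ α)
    (hM : ∀ x ∈ Icc 0 ξ₀, |deriv p x| ≤ M) {r a d : ℝ} (hr : ξ₀ ≤ r) (ha : r ≤ a)
    (had : r ≤ |a + d|) :
    min a |d| * (c₀ * (r / 2) ^ α - M) ≤ |p (a + d) - p a - p d| := by
  set X := c₀ * (r / 2) ^ α - M
  have hr0 : 0 < r := hp.xi0_pos.trans_le hr
  rcases lt_or_ge X 0 with hX | hX
  · exact (mul_nonpos_of_nonneg_of_nonpos (le_min (by linarith) (abs_nonneg d)) hX.le).trans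
      (abs_nonneg _)
  have hXle : ∀ x, r ≤ x → X ≤ c₀ * (x / 2) ^ α - M := fun x hx => by
    have : (r / 2) ^ α ≤ (x / 2) ^ α := by gcongr
    linarith [mul_le_mul_of_nonneg_left this hp.c_pos.le]
  -- `a`, `d`, `-(a + d)` sum to zero; the two of them with a common sign are `x`, `y` below
  rcases le_or_gt 0 d with hd | hd
  · have hwave := hp.mul_le_map_add_sub_sub hα hM (hr.trans ha) hd
    calc min a |d| * X ≤ d * (c₀ * (a / 2) ^ α - M) := by
          rw [abs_of_nonneg hd]
          exact mul_le_mul (min_le_right _ _) (hXle a ha) hX hd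
      _ ≤ |p (a + d) - p a - p d| := hwave.trans (le_abs_self _)
  rcases le_or_gt 0 (a + d) with had0 | had0
  · rw [abs_of_nonneg had0] at had
    have hwave := hp.mul_le_map_add_sub_sub hα hM (hr.trans had) (neg_nonneg.2 hd.le)
    rw [show a + d + -d = a by ring, hp.odd] at hwave
    calc min a |d| * X ≤ -d * (c₀ * ((a + d) / 2) ^ α - M) := by
          rw [← abs_of_neg hd]
          exact mul_le_mul (min_le_right _ _) (hXle _ had) hX (abs_nonneg d)
      _ ≤ -(p (a + d) - p a - p d) := by linarith
      _ ≤ |p (a + d) - p a - p d| := neg_le_abs _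
  · rw [abs_of_neg had0] at had
    have hwave := hp.mul_le_map_add_sub_sub hα hM (hr.trans had) (hr0.trans_le ha).le
    rw [show -(a + d) + a = -d by ring, hp.odd, hp.odd] at hwave
    calc min a |d| * X ≤ a * (c₀ * (-(a + d) / 2) ^ α - M) :=
          mul_le_mul (min_le_left _ _) (hXle _ had) hX (by linarith)
      _ ≤ p (a + d) - p a - p d := by linarith
      _ ≤ |p (a + d) - p a - p d| := le_abs_self _

theorem abs_deriv_le (hp : Hyp1 α ξ₀ c₀ C₀ p) (hα : 0 ≤ α)
    (hM : ∀ x ∈ Icc 0 ξ₀, |deriv p x| ≤ M) {t R : ℝ} (ht : |t| ≤ R) :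
    |deriv p t| ≤ M + C₀ * R ^ α := by
  have hC₀ : 0 < C₀ := hp.c_pos.trans_le hp.c_le_C
  have heven : deriv p t = deriv p |t| := by
    rcases abs_choice t with h | h
    · rw [h]
    · rw [h, hp.deriv_neg]
  rw [heven]
  rcases le_or_gt |t| ξ₀ with htξ | htξ
  · have : 0 ≤ C₀ * R ^ α := by
      have : 0 ≤ R := (abs_nonneg t).trans ht
      positivity
    linarith [hM |t| ⟨abs_nonneg t, htξ⟩]
  · have hM0 : 0 ≤ M := (abs_nonneg _).trans (hM 0 ⟨le_rfl, hp.xi0_pos.le⟩)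
    have hpos : 0 < c₀ * |t| ^ α :=
      mul_pos hp.c_pos (Real.rpow_pos_of_pos (hp.xi0_pos.trans htξ) α)
    have : C₀ * |t| ^ α ≤ C₀ * R ^ α := by gcongr
    rw [abs_of_pos (hpos.trans_le (hp.deriv_lb _ htξ.le))]
    linarith [hp.deriv_ub _ htξ.le]

theorem abs_map_sub_le (hp : Hyp1 α ξ₀ c₀ C₀ p) (hα : 0 ≤ α)
    (hM : ∀ x ∈ Icc 0 ξ₀, |deriv p x| ≤ M) {x y R : ℝ} (hx : |x| ≤ R) (hy : |y| ≤ R) :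
    |p x - p y| ≤ (M + C₀ * R ^ α) * |x - y| :=
  (convex_Icc (-R) R).norm_image_sub_le_of_norm_deriv_le
    (fun _ _ => hp.differentiable _)
    (fun _ ht => hp.abs_deriv_le hα hM (abs_le.2 ht)) (abs_le.1 hy) (abs_le.1 hx)

theorem abs_sum_map_le (hp : Hyp1 α ξ₀ c₀ C₀ p) (hα : 0 ≤ α)
    (hM : ∀ x ∈ Icc 0 ξ₀, |deriv p x| ≤ M) {ι : Type*} (s : Finset ι) (η : ι → ℝ) {R : ℝ}
    (hη : ∀ i ∈ s, |η i| ≤ R) :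
    |∑ i ∈ s, p (η i)| ≤ (M + C₀ * R ^ α) * ∑ i ∈ s, |η i| := by
  rw [Finset.mul_sum]
  refine (Finset.abs_sum_le_sum_abs _ _).trans (Finset.sum_le_sum fun i hi => ?_)
  have h0 : |(0 : ℝ)| ≤ R := by simpa using (abs_nonneg _).trans (hη i hi)
  simpa [hp.map_zero] using hp.abs_map_sub_le hα hM (hη i hi) h0

theorem sub_le_abs_resonance_of_pos (hp : Hyp1 α ξ₀ c₀ C₀ p) (hα : 1 ≤ α)
    (hM : ∀ x ∈ Icc 0 ξ₀, |deriv p x| ≤ M) {C₁ K a b d : ℝ} {ι : Type*} (s : Finset ι)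
    (η : ι → ℝ) (hC₁ : 1 ≤ C₁) (hK : 2 * C₁ ^ 3 ≤ K) (hKξ : 2 * C₁ * ξ₀ ≤ K)
    (hsum : a + b + d + ∑ i ∈ s, η i = 0) (ha : K ≤ a) (hab : a ≤ C₁ * |b|)
    (hba : |b| ≤ C₁ * a) (hdb : |d| ≤ C₁ * |b|) (hη : ∑ i ∈ s, |η i| ≤ |d| / K) :
    min a |d| * (c₀ * (a / (2 * C₁) / 2) ^ α - M)
        - 2 * (M + C₀ * (2 * C₁ ^ 2 * a) ^ α) * (|d| / K)
      ≤ |p a + p b + p d + ∑ i ∈ s, p (η i)| := by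
  have hK0 : 0 < K := by linarith [one_le_pow₀ (n := 3) hC₁]
  have ha0 : 0 < a := hK0.trans_le ha
  have hC₁0 : 0 < 2 * C₁ := by linarith
  have hM0 : 0 ≤ M := (abs_nonneg _).trans (hM 0 ⟨le_rfl, hp.xi0_pos.le⟩)
  have hC₀ : 0 < C₀ := hp.c_pos.trans_le hp.c_le_C
  have hd : |d| ≤ C₁ ^ 2 * a := by nlinarith
  have hdK : |d| / K ≤ a / (2 * C₁) := by
    rw [div_le_div_iff₀ hK0 hC₁0]
    nlinarith
  have hs : |∑ i ∈ s, η i| ≤ |d| / K := (Finset.abs_sum_le_sum_abs _ _).trans hη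
  have had : a / (2 * C₁) ≤ |a + d| := by
    have hb : |b| ≤ |a + d| + |∑ i ∈ s, η i| := by
      rw [show b = -((a + d) + ∑ i ∈ s, η i) by linarith, abs_neg]
      exact abs_add_le _ _
    have hhalf : a / (2 * C₁) = a / C₁ - a / (2 * C₁) := by field_simp; ring
    have hb_lb : a / C₁ ≤ |b| := by rw [div_le_iff₀ (by linarith)]; linarith
    linarith
  have hr : ξ₀ ≤ a / (2 * C₁) := by rw [le_div_iff₀ hC₁0]; linarith
  have hra : a / (2 * C₁) ≤ a := div_le_self ha0.le (by linarith)
  have hmain := hp.min_mul_le_abs_map_add_sub_sub hα hM hr hra had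
  -- `Λ` bounds `|p'|` on `[-R, R]`, `R = 2 C₁² a`, which contains `b`, `-(a + d)` and all `η i`
  set Λ := M + C₀ * (2 * C₁ ^ 2 * a) ^ α
  have hΛ : 0 ≤ Λ := by positivity
  have hRa : a ≤ 2 * C₁ ^ 2 * a := by nlinarith
  have hb : |p b - p (-(a + d))| ≤ Λ * (|d| / K) := by
    refine (hp.abs_map_sub_le (R := 2 * C₁ ^ 2 * a) (by linarith) hM (by nlinarith) ?_).trans ?_
    · rw [abs_neg]
      exact (abs_add_le a d).trans (by rw [abs_of_pos ha0]; nlinarith)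
    · rw [show b - -(a + d) = -∑ i ∈ s, η i by linarith, abs_neg]
      exact mul_le_mul_of_nonneg_left hs hΛ
  have htail : |∑ i ∈ s, p (η i)| ≤ Λ * (|d| / K) := by
    refine (hp.abs_sum_map_le (by linarith) hM s η fun i hi => ?_).trans
      (mul_le_mul_of_nonneg_left hη hΛ)
    linarith [Finset.single_le_sum (fun j _ => abs_nonneg (η j)) hi]
  have hsplit : p (a + d) - p a - p d
      = -(p a + p b + p d + ∑ i ∈ s, p (η i)) + (p b - p (-(a + d))) + ∑ i ∈ s, p (η i) := by
    rw [hp.odd]; ring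
  have htri := abs_add_three (-(p a + p b + p d + ∑ i ∈ s, p (η i))) (p b - p (-(a + d)))
    (∑ i ∈ s, p (η i))
  rw [← hsplit, abs_neg] at htri
  linarith

theorem mul_le_abs_resonance_of_pos (hp : Hyp1 α ξ₀ c₀ C₀ p) (hα : 1 ≤ α)
    (hM : ∀ x ∈ Icc 0 ξ₀, |deriv p x| ≤ M) {C₁ K a b d : ℝ} {ι : Type*} (s : Finset ι)
    (η : ι → ℝ) (hC₁ : 1 ≤ C₁) (hK : 2 * C₁ ^ 3 ≤ K) (hKξ : 2 * C₁ * ξ₀ ≤ K)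
    (hKc : 2 * (3 + 2 * (C₀ * (2 * C₁ ^ 2) ^ α)) ≤ c₀ / (4 * C₁) ^ α / C₁ ^ 2 * K)
    (hsum : a + b + d + ∑ i ∈ s, η i = 0) (ha : K ≤ a) (haM : K * M ≤ a ^ α)
    (hab : a ≤ C₁ * |b|) (hba : |b| ≤ C₁ * a) (hdb : |d| ≤ C₁ * |b|)
    (hη : ∑ i ∈ s, |η i| ≤ |d| / K) :
    c₀ / (4 * C₁) ^ α / C₁ ^ 2 / 2 * |d| * a ^ α ≤ |p a + p b + p d + ∑ i ∈ s, p (η i)| := by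
  refine le_trans ?_ (hp.sub_le_abs_resonance_of_pos hα hM s η hC₁ hK hKξ hsum ha hab hba hdb hη)
  have hK1 : 1 ≤ K := by nlinarith [one_le_pow₀ (n := 3) hC₁]
  have ha0 : 0 < a := by linarith
  have hM0 : 0 ≤ M := (abs_nonneg _).trans (hM 0 ⟨le_rfl, hp.xi0_pos.le⟩)
  set κ := c₀ / (4 * C₁) ^ α / C₁ ^ 2
  set A := a ^ α
  set u := |d| / K
  have hA : 0 ≤ A := by positivity
  have hu : 0 ≤ u := by positivity
  have hκ : 0 ≤ κ := by have := hp.c_pos; positivity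
  have hdu : |d| = K * u := by simp only [u]; field_simp
  have hpow : c₀ * (a / (2 * C₁) / 2) ^ α = κ * C₁ ^ 2 * A := by
    rw [show a / (2 * C₁) / 2 = a / (4 * C₁) by field_simp; ring,
      Real.div_rpow ha0.le (by linarith)]
    simp only [κ, A]
    field_simp
  have hmin : |d| / C₁ ^ 2 ≤ min a |d| := by
    refine le_min ((div_le_iff₀ (by positivity)).2 (by nlinarith)) (div_le_self (abs_nonneg d) ?_)
    nlinarith
  have hmain : κ * K * u * A - u * A ≤ min a |d| * (κ * C₁ ^ 2 * A - M) := by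
    have h1 := mul_le_mul_of_nonneg_right hmin (by positivity : 0 ≤ κ * C₁ ^ 2 * A)
    have h2 := mul_le_mul_of_nonneg_right (min_le_right a |d|) hM0
    have h3 : |d| / C₁ ^ 2 * (κ * C₁ ^ 2 * A) = κ * K * u * A := by
      rw [hdu]; field_simp
    have h4 : |d| * M ≤ u * A := by rw [hdu]; nlinarith
    nlinarith
  have hMA : M * u ≤ A * u :=
    mul_le_mul_of_nonneg_right ((le_mul_of_one_le_left hM0 hK1).trans haM) hu
  have hE := mul_le_mul_of_nonneg_right hKc (by positivity : 0 ≤ u * A)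
  have hR : (2 * C₁ ^ 2 * a) ^ α = (2 * C₁ ^ 2) ^ α * A := Real.mul_rpow (by positivity) ha0.le
  have hlhs : κ / 2 * |d| * A = κ / 2 * K * u * A := by rw [hdu]; ring
  rw [hpow, hR, hlhs]
  linarith

theorem mul_le_abs_resonance (hp : Hyp1 α ξ₀ c₀ C₀ p) (hα : 1 ≤ α)
    (hM : ∀ x ∈ Icc 0 ξ₀, |deriv p x| ≤ M) {C₁ K a b d : ℝ} {ι : Type*} (s : Finset ι)
    (η : ι → ℝ) (hC₁ : 1 ≤ C₁) (hK : 2 * C₁ ^ 3 ≤ K) (hKξ : 2 * C₁ * ξ₀ ≤ K)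
    (hKc : 2 * (3 + 2 * (C₀ * (2 * C₁ ^ 2) ^ α)) ≤ c₀ / (4 * C₁) ^ α / C₁ ^ 2 * K)
    (hsum : a + b + d + ∑ i ∈ s, η i = 0) (ha : K ≤ |a|) (haM : K * M ≤ |a| ^ α)
    (hab : |a| ≤ C₁ * |b|) (hba : |b| ≤ C₁ * |a|) (hdb : |d| ≤ C₁ * |b|)
    (hη : ∑ i ∈ s, |η i| ≤ |d| / K) :
    c₀ / (4 * C₁) ^ α / C₁ ^ 2 / 2 * |d| * |a| ^ α
      ≤ |p a + p b + p d + ∑ i ∈ s, p (η i)| := by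
  rcases le_or_gt 0 a with ha0 | ha0
  · rw [abs_of_nonneg ha0] at *
    exact hp.mul_le_abs_resonance_of_pos hα hM s η hC₁ hK hKξ hKc hsum ha haM hab hba hdb hη
  · have hneg := hp.mul_le_abs_resonance_of_pos hα hM s (fun i => -η i) (a := -a) (b := -b)
      (d := -d) hC₁ hK hKξ hKc (by simp only [Finset.sum_neg_distrib]; linarith)
      (by rwa [← abs_of_neg ha0]) (by rwa [← abs_of_neg ha0]) (by rwa [abs_neg, ← abs_of_neg ha0])
      (by rwa [abs_neg, ← abs_of_neg ha0]) (by rwa [abs_neg, abs_neg])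
      (by simpa only [abs_neg] using hη)
    simp only [hp.odd, Finset.sum_neg_distrib, ← neg_add, abs_neg] at hneg
    rwa [← abs_of_neg ha0] at hneg

end Hyp1

/-- resonance lower bound, Lemma `lem_res1`:
with `Ω_{k+1}(ξ₁,…,ξ_{k+2}) = ∑ p(ξ_n)`, for every `C₁ ≥ 1` there are `c > 0`
and `K ≥ 1` such that for every `k ≥ 1` and every integer vector
`(ξ₁,…,ξ_{k+2})` summing to `0` with `|ξ₁| ∼ |ξ₂| ≳ |ξ₃|` (with constant `C₁`)
and `|ξ₃| ≥ K k max_{j ≥ 4} |ξ_j|`, one has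
`|Ω| ≥ c |ξ₃| |ξ₁|^α` as soon as `|ξ₁| ≥ K (1 + max_{[0,ξ₀]} |p'|)^{1/α}`.
(The indices are `0`-based: `ξ 0, ξ 1, ξ 2` play the roles of `ξ₁, ξ₂, ξ₃`.) -/
theorem resonance_lower_bound
    (α ξ₀ c₀ C₀ : ℝ) (hα : α ∈ Set.Icc (1:ℝ) 2)
    (p : ℝ → ℝ) (hp : Hyp1 α ξ₀ c₀ C₀ p)
    (C₁ : ℝ) (hC₁ : 1 ≤ C₁) :
    ∃ c : ℝ, 0 < c ∧ ∃ K : ℝ, 1 ≤ K ∧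
      ∀ (k : ℕ), 1 ≤ k →
      ∀ ξ : Fin (k + 2) → ℤ,
        (∑ j, ξ j) = 0 →
        |(ξ 0 : ℝ)| ≤ C₁ * |(ξ 1 : ℝ)| →
        |(ξ 1 : ℝ)| ≤ C₁ * |(ξ 0 : ℝ)| →
        |(ξ 2 : ℝ)| ≤ C₁ * |(ξ 1 : ℝ)| →
        (∀ j : Fin (k + 2), 3 ≤ (j : ℕ) → K * k * |(ξ j : ℝ)| ≤ |(ξ 2 : ℝ)|) →
        K * (1 + sSup ((fun x => |deriv p x|) '' Set.Icc 0 ξ₀)) ^ (1/α) ≤ |(ξ 0 : ℝ)| →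
        c * |(ξ 2 : ℝ)| * |(ξ 0 : ℝ)| ^ α ≤ |∑ n, p (ξ n)| := by
  have hM := hp.abs_deriv_le_sSup
  have hM0 := (abs_nonneg _).trans (hM 0 ⟨le_rfl, hp.xi0_pos.le⟩)
  set κ := c₀ / (4 * C₁) ^ α / C₁ ^ 2
  have hκ : 0 < κ := by have := hp.c_pos; positivity
  set K := max (max (2 * C₁ ^ 3) (2 * C₁ * ξ₀)) (2 * (3 + 2 * (C₀ * (2 * C₁ ^ 2) ^ α)) / κ)
  have hK : 2 * C₁ ^ 3 ≤ K := le_max_of_le_left (le_max_left _ _)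
  have hK1 : 1 ≤ K := by linarith [one_le_pow₀ (n := 3) hC₁]
  refine ⟨κ / 2, by positivity, K, hK1, fun k hk ξ hsum h01 h10 h21 htail hbig => ?_⟩
  obtain ⟨m, rfl⟩ := Nat.exists_eq_add_of_le' hk
  obtain ⟨haK, haM⟩ := le_and_mul_le_rpow_of_mul_rpow_le hα.1 hK1 hM0 hbig
  rw [Fin.sum_univ_three_add] at hsum ⊢
  refine hp.mul_le_abs_resonance hα.1 hM Finset.univ (fun j : Fin m => (ξ j.succ.succ.succ : ℝ))
    hC₁ hK (le_max_of_le_left (le_max_right _ _)) ((div_le_iff₀' hκ).1 (le_max_right _ _))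
    (by exact_mod_cast hsum) haK haM h01 h10 h21
    (sum_abs_le_div_of_mul_le _ (by positivity) (abs_nonneg _) fun j => ?_)
  exact htail j.succ.succ.succ (by simp)

end
end
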